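/- Let E be a real normed vector space, γ ∈ [0,1), δ ≥ 0, L_R ≥ 0, and H ∈ ℕ. Let T, T̂ : E → E with T nonexpansive (Lipschitz with constant 1) and ‖T̂(x) − T(x)‖ ≤ δ for all x ∈ E, and let R : E → ℝ be Lipschitz with constant L_R. Then for every z ∈ E, |∑_{t=0}^{H−1} γ^t (R(T̂^t(z)) − R(T^t(z)))| ≤ L_R·δ·H/(1 − γ). (This is a precise form of the Robustness to Model Perturbations proposition: if the learned model has uniform error at most δ, the H-horizon discounted value computed through the learned model deviates from the true one by at most H·δ·L_R/(1−γ).) -/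
import Mathlib


/-- Precise form of the Robustness to Model Perturbations proposition: with
nonexpansive true dynamics `T`, a learned model `T̂` with uniform one-step error `δ`,
and an `L_R`-Lipschitz reward `R`, the `H`-horizon discounted values computed through
the two models differ by at most `L_R·δ·H/(1-γ)`. -/
theorem robustness_to_model_perturbations
    {E : Type*} [NormedAddCommGroup E] [NormedSpace ℝ E]
    (γ δ LR : ℝ) (hγ0 : 0 ≤ γ) (hγ1 : γ < 1) (hδ : 0 ≤ δ) (hLR : 0 ≤ LR)
    (H : ℕ) (T That : E → E) (R : E → ℝ)
    (hTlip : ∀ x y : E, ‖T x - T y‖ ≤ 1 * ‖x - y‖)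
    (herr : ∀ x : E, ‖That x - T x‖ ≤ δ)
    (hRlip : ∀ x y : E, |R x - R y| ≤ LR * ‖x - y‖) :
    ∀ z : E,
      |∑ t ∈ Finset.range H, γ ^ t * (R (That^[t] z) - R (T^[t] z))| ≤
        LR * δ * H / (1 - γ) := by
  intro z
  have hdrift : ∀ t : ℕ, ‖That^[t] z - T^[t] z‖ ≤ t * δ := by
    intro t
    induction t with
    | zero => simp
    | succ n ih =>
      rw [Function.iterate_succ_apply', Function.iterate_succ_apply']
      calc ‖That (That^[n] z) - T (T^[n] z)‖
          ≤ ‖That (That^[n] z) - T (That^[n] z)‖ + ‖T (That^[n] z) - T (T^[n] z)‖ := by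
            have := norm_sub_le_norm_sub_add_norm_sub (That (That^[n] z)) (T (That^[n] z)) (T (T^[n] z))
            linarith [norm_sub_le (That (That^[n] z) - T (That^[n] z)) (T (T^[n] z) - T (That^[n] z))]
        _ ≤ δ + 1 * ‖That^[n] z - T^[n] z‖ := add_le_add (herr _) (hTlip _ _)
        _ ≤ δ + n * δ := by linarith [ih]
        _ = (n + 1 : ℕ) * δ := by push_cast; ring
  have hterm : ∀ t ∈ Finset.range H, |γ ^ t * (R (That^[t] z) - R (T^[t] z))| ≤ γ ^ t * (LR * δ * H) := by
    intro t ht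
    rw [abs_mul, abs_pow, abs_of_nonneg hγ0]
    apply mul_le_mul_of_nonneg_left _ (pow_nonneg hγ0 t)
    calc |R (That^[t] z) - R (T^[t] z)| ≤ LR * ‖That^[t] z - T^[t] z‖ := hRlip _ _
      _ ≤ LR * (t * δ) := by
          exact mul_le_mul_of_nonneg_left (hdrift t) hLR
      _ ≤ LR * δ * H := by
          have ht' : (t : ℝ) ≤ H := by
            exact_mod_cast le_of_lt (Finset.mem_range.mp ht)
          nlinarith [mul_nonneg hLR hδ, ht']
  calc |∑ t ∈ Finset.range H, γ ^ t * (R (That^[t] z) - R (T^[t] z))|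
      ≤ ∑ t ∈ Finset.range H, |γ ^ t * (R (That^[t] z) - R (T^[t] z))| :=
        Finset.abs_sum_le_sum_abs _ _
    _ ≤ ∑ t ∈ Finset.range H, γ ^ t * (LR * δ * H) := Finset.sum_le_sum hterm
    _ = (∑ t ∈ Finset.range H, γ ^ t) * (LR * δ * H) := by rw [Finset.sum_mul]
    _ ≤ (1 / (1 - γ)) * (LR * δ * H) := by
        apply mul_le_mul_of_nonneg_right _ (by positivity)
        have hne : γ ≠ 1 := ne_of_lt hγ1
        rw [geom_sum_eq hne, ← neg_sub (1:ℝ) (γ^H), ← neg_sub (1:ℝ) γ, neg_div_neg_eq]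
        have h1 : (0:ℝ) < 1 - γ := by linarith
        have hp : (0:ℝ) ≤ γ ^ H := pow_nonneg hγ0 H
        gcongr
        linarith
    _ = LR * δ * H / (1 - γ) := by ring
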